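/- Let X_1, …, X_n be Banach spaces, X = ∏_{i=1}^n X_i with norm ‖x‖ = max_i ‖x_i‖.aLet M be a finite family of maps F : X → X sharing a common fixed point x̃ ∈ X, each F having a Lipschitz matrix A_F ∈ ℝ^{n×n}, and let μ : M → [0,1] with ∑ μ(F) = 1. Suppose ρ(∑_{F∈M} μ(F) A_F) < 1. Let L ≥ 1 and let π be a probability weight function on pairs (F, D), where F ∈ M and D is a delay matrix with entries in {0,…,L}, satisfying ∑_D π(F, D) = μ(F) for each F ∈ M. Then there exist constants C > 0 and β > 0 such that for all k ≥ 1 and all initial conditions x^0 ∈ X_L, ∑_{w} (∏_{m=1}^k π(w_m)) ‖(w_k)_{D} ∘ ⋯ ∘ (w_1)_{D}(x^0) − x̃_L‖ ≤ C e^{−βk} ‖x^0 − x̃_L‖, where the sum is over words w = (w_1, …, w_k) of pairs (F, D), each (w_m)_D denotes the delayed version F_D of the corresponding pair, and x̃_L ∈ X_L is defined by (x̃_L)_{i,ℓ} = x̃_i for all i, ℓ. -/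

import Mathlib

/-!
The mean Lipschitz matrix `Â = ∑ μ_F A_F` is nonnegative with `ρ(Â) < 1`, so by Gelfand's formula
some power `Â ^ N` has all row sums `≤ c < 1`; then `v = ∑_{r<N} c^{-r/N} Â^r 𝟙 ≥ 𝟙` satisfies
`Â v ≤ b v` with `b = c^{1/N} < 1`. Put `γ = b^{1/(L+1)}`. The expected error `e_k(i, ℓ)` of
coordinate `(i, ℓ)` after `k` delayed steps obeys
`e_{k+1}(i, 0) ≤ ∑_{F,D} π(F, D) ∑_j (A_F)_{ij} e_k(j, D_{ij})` and `e_{k+1}(i, ℓ+1) = e_k(i, ℓ)`,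
so `γ^ℓ e_k(i, ℓ) ≤ γ^k v_i ‖x⁰ - x̃_L‖` by induction on `k`: reading a value that is up to `L`
steps old costs a factor `γ^{-L}`, which the contraction `b = γ^{L+1}` of `Â` more than repays.
-/

open Matrix BigOperators

/-- The spectral radius of a real square matrix: the maximum modulus of its
complex eigenvalues. -/
noncomputable def specRad {m : Type*} [Fintype m] [DecidableEq m]
    (A : Matrix m m ℝ) : ℝ :=
  (spectralRadius ℂ (A.map (algebraMap ℝ ℂ))).toReal

/-- The delayed version `F_D` of a map `F` on a product of Banach spaces, with delay
matrix `D` (entries in `{0,…,L}`): component `(i,0)` applies `F i` to the delayed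
coordinates `x (j, D i j)`, and component `(i,ℓ+1)` stores `x (i,ℓ)`. -/
def delayedMap {n L : ℕ} {X : Fin n → Type*}
    (F : (∀ i, X i) → ∀ i, X i) (D : Fin n → Fin n → Fin (L + 1)) :
    (∀ p : Fin n × Fin (L + 1), X p.1) → ∀ p : Fin n × Fin (L + 1), X p.1 :=
  fun x p =>
    if h : (p.2 : ℕ) = 0 then F (fun j => x (j, D p.1 j)) p.1
    else x (p.1, ⟨(p.2 : ℕ) - 1, by have := p.2.isLt; omega⟩)

/-- Ordered composition `F (w (k-1)) ∘ ⋯ ∘ F (w 0)` applied to `x0`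
(i.e. `w_k ∘ ⋯ ∘ w_1 (x^0)` with 1-based indexing). -/
def wordComp {X : Type*} {k : ℕ} {ι : Type*} (F : ι → X → X)
    (w : Fin k → ι) (x0 : X) : X :=
  (List.ofFn fun m => F (w m)).foldl (fun x f => f x) x0

open scoped NNReal
open Finset

lemma exists_pow_abs_row_sum_le_of_specRad_lt_one {m : Type*} [Fintype m] [DecidableEq m]
    {B : Matrix m m ℝ} (hρ : specRad B < 1) :
    ∃ N, 0 < N ∧ ∃ c, 0 < c ∧ c < 1 ∧ ∀ i, ∑ j, |(B ^ N) i j| ≤ c := by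
  let _ := Matrix.linftyOpNormedRing (n := m) (α := ℂ)
  let _ := Matrix.linftyOpNormedAlgebra (R := ℂ) (n := m) (α := ℂ)
  have : CompleteSpace (Matrix m m ℂ) := FiniteDimensional.complete ℂ _
  set B' : Matrix m m ℂ := B.map (algebraMap ℝ ℂ)
  have hB' : spectralRadius ℂ B' < 1 := by
    have hfin : spectralRadius ℂ B' ≠ ⊤ :=
      ne_top_of_le_ne_top (by finiteness) (spectrum.spectralRadius_le_pow_nnnorm_pow_one_div ℂ B' 0)
    rwa [← ENNReal.toReal_lt_toReal hfin ENNReal.one_ne_top, ENNReal.toReal_one]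
  obtain ⟨N, hN, hN0⟩ :=
    (((spectrum.pow_nnnorm_pow_one_div_tendsto_nhds_spectralRadius B').eventually_lt_const hB').and
      (Filter.eventually_gt_atTop 0)).exists
  have hnorm : ‖B' ^ N‖ < 1 := by
    by_contra! h
    exact hN.not_ge (ENNReal.one_le_rpow (by exact_mod_cast h) (by positivity))
  refine ⟨N, hN0, max ‖B' ^ N‖ (1 / 2), by positivity, max_lt hnorm (by norm_num), fun i => ?_⟩
  have hpow : B' ^ N = (B ^ N).map (algebraMap ℝ ℂ) := by
    simp only [B', ← RingHom.mapMatrix_apply, map_pow]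
  calc ∑ j, |(B ^ N) i j| = ((∑ j, ‖(B' ^ N) i j‖₊ : ℝ≥0) : ℝ) := by simp [hpow]
    _ ≤ ‖B' ^ N‖ := by
      rw [Matrix.linfty_opNorm_def]
      exact_mod_cast le_sup (f := fun i => ∑ j, ‖(B' ^ N) i j‖₊) (mem_univ i)
    _ ≤ _ := le_max_left _ _

lemma exists_contraction_vector_of_pow_row_sum_le {m : Type*} [Fintype m] [DecidableEq m]
    {B : Matrix m m ℝ} (hB : ∀ i j, 0 ≤ B i j) {N : ℕ} (hN : 0 < N) {c : ℝ} (hc0 : 0 < c)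
    (hc1 : c < 1) (hrow : ∀ i, ∑ j, |(B ^ N) i j| ≤ c) :
    ∃ b : ℝ, 0 < b ∧ b < 1 ∧ ∃ v : m → ℝ, (∀ i, 1 ≤ v i) ∧ B *ᵥ v ≤ b • v := by
  set g := c ^ (N⁻¹ : ℝ)
  have hg0 : 0 < g := Real.rpow_pos_of_pos hc0 _
  have hgN : g ^ N = c := Real.rpow_inv_natCast_pow hc0.le hN.ne'
  set s : ℕ → m → ℝ := fun r => (B ^ r) *ᵥ 1
  have hs_nonneg : ∀ r i, 0 ≤ s r i := fun r i =>
    sum_nonneg fun j _ => mul_nonneg (pow_apply_nonneg hB r i j) zero_le_one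
  have hs_succ : ∀ r, B *ᵥ s r = s (r + 1) := by simp [s, Matrix.mulVec_mulVec, pow_succ']
  have hsN : ∀ i, s N i ≤ c := fun i =>
    (sum_le_sum fun j _ => by simpa using le_abs_self ((B ^ N) i j)).trans (hrow i)
  set v := ∑ r ∈ range N, g⁻¹ ^ r • s r
  have hv : ∀ i, v i = ∑ r ∈ range N, g⁻¹ ^ r * s r i := fun i => by simp [v]
  refine ⟨g, hg0, Real.rpow_lt_one hc0.le hc1 (by positivity), v, fun i => ?_, fun i => ?_⟩
  · rw [hv]
    calc (1 : ℝ) = g⁻¹ ^ 0 * s 0 i := by simp [s]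
      _ ≤ _ := single_le_sum (fun r _ => mul_nonneg (by positivity) (hs_nonneg r i))
          (mem_range.2 hN)
  · have hBv : (B *ᵥ v) i = ∑ r ∈ range N, g⁻¹ ^ r * s (r + 1) i := by
      simp [v, Matrix.mulVec_sum, Matrix.mulVec_smul, hs_succ]
    have htail : g⁻¹ ^ N * s N i ≤ 1 := by
      rw [inv_pow, inv_mul_le_iff₀ (pow_pos hg0 N), hgN, mul_one]
      exact hsN i
    calc (B *ᵥ v) i = g * ∑ r ∈ range N, g⁻¹ ^ (r + 1) * s (r + 1) i := by
          rw [hBv, mul_sum]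
          refine sum_congr rfl fun r _ => ?_
          rw [pow_succ, mul_assoc, mul_left_comm, mul_inv_cancel_left₀ hg0.ne']
      _ = g * (v i + g⁻¹ ^ N * s N i - 1) := by
          rw [hv, ← sum_range_succ, sum_range_succ']
          simp [s]
      _ ≤ (g • v) i := by
          rw [Pi.smul_apply, smul_eq_mul]
          nlinarith

lemma exists_contraction_vector_of_specRad_lt_one {m : Type*} [Fintype m] [DecidableEq m]
    {B : Matrix m m ℝ} (hB : ∀ i j, 0 ≤ B i j) (hρ : specRad B < 1) :
    ∃ b : ℝ, 0 < b ∧ b < 1 ∧ ∃ v : m → ℝ, (∀ i, 1 ≤ v i) ∧ B *ᵥ v ≤ b • v :=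
  let ⟨_, hN, _, hc0, hc1, hrow⟩ := exists_pow_abs_row_sum_le_of_specRad_lt_one hρ
  exists_contraction_vector_of_pow_row_sum_le hB hN hc0 hc1 hrow

section Words

variable {Y κ : Type*} (G : κ → Y → Y)

lemma wordComp_snoc {k : ℕ} (w : Fin k → κ) (a : κ) (y : Y) :
    wordComp G (Fin.snoc w a) y = G a (wordComp G w y) := by
  rw [wordComp, List.ofFn_succ']
  simp [wordComp, List.concat_eq_append]

variable [Fintype κ] (π : κ → ℝ)

def wordMean (k : ℕ) (φ : Y → ℝ) (y : Y) : ℝ :=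
  ∑ w : Fin k → κ, (∏ m, π (w m)) * φ (wordComp G w y)

lemma wordMean_zero (φ : Y → ℝ) (y : Y) : wordMean G π 0 φ y = φ y := by
  simp [wordMean, wordComp]

lemma wordMean_succ (k : ℕ) (φ : Y → ℝ) (y : Y) :
    wordMean G π (k + 1) φ y = ∑ a, π a * wordMean G π k (fun z => φ (G a z)) y := by
  rw [wordMean, ← (Fin.snocEquiv fun _ => κ).sum_comp, Fintype.sum_prod_type]
  refine sum_congr rfl fun a _ => ?_
  simp only [wordMean, mul_sum, Fin.snocEquiv, Equiv.coe_fn_mk, wordComp_snoc,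
    Fin.prod_univ_castSucc, Fin.snoc_castSucc, Fin.snoc_last]
  exact sum_congr rfl fun w _ => by ring

lemma wordMean_sum_mul {J : Type*} (s : Finset J) (c : J → ℝ) (φ : J → Y → ℝ) (k : ℕ) (y : Y) :
    wordMean G π k (fun z => ∑ j ∈ s, c j * φ j z) y = ∑ j ∈ s, c j * wordMean G π k (φ j) y := by
  simp only [wordMean, mul_sum]
  rw [sum_comm]
  exact sum_congr rfl fun j _ => sum_congr rfl fun w _ => by ring

variable {π}

lemma wordMean_mono (hπ : ∀ a, 0 ≤ π a) {φ ψ : Y → ℝ} (h : ∀ z, φ z ≤ ψ z) (k : ℕ) (y : Y) :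
    wordMean G π k φ y ≤ wordMean G π k ψ y :=
  sum_le_sum fun _ _ => mul_le_mul_of_nonneg_left (h _) (prod_nonneg fun _ _ => hπ _)

lemma wordMean_nonneg (hπ : ∀ a, 0 ≤ π a) {φ : Y → ℝ} (h : ∀ z, 0 ≤ φ z) (k : ℕ) (y : Y) :
    0 ≤ wordMean G π k φ y :=
  sum_nonneg fun _ _ => mul_nonneg (prod_nonneg fun _ _ => hπ _) (h _)

end Words

section Delayed

variable {n L : ℕ} {X : Fin n → Type*}

@[simp]
lemma delayedMap_apply_zero (F : (∀ i, X i) → ∀ i, X i) (D : Fin n → Fin n → Fin (L + 1))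
    (x : ∀ p : Fin n × Fin (L + 1), X p.1) (i : Fin n) :
    delayedMap F D x (i, 0) = F (fun j => x (j, D i j)) i := by
  simp [delayedMap]

@[simp]
lemma delayedMap_apply_succ (F : (∀ i, X i) → ∀ i, X i) (D : Fin n → Fin n → Fin (L + 1))
    (x : ∀ p : Fin n × Fin (L + 1), X p.1) (i : Fin n) (ℓ : Fin L) :
    delayedMap F D x (i, ℓ.succ) = x (i, ℓ.castSucc) := by
  simp [delayedMap]
  rfl

variable [∀ i, NormedAddCommGroup (X i)] {κ : Type*} [Fintype κ]
  (F : κ → (∀ i, X i) → ∀ i, X i) (D : κ → Fin n → Fin n → Fin (L + 1)) (π : κ → ℝ)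
  (xfix : ∀ i, X i) (x0 : ∀ p : Fin n × Fin (L + 1), X p.1)

def expectedError (k : ℕ) (p : Fin n × Fin (L + 1)) : ℝ :=
  wordMean (fun a => delayedMap (F a) (D a)) π k (fun y => ‖y p - xfix p.1‖) x0

lemma expectedError_zero (p : Fin n × Fin (L + 1)) :
    expectedError F D π xfix x0 0 p = ‖x0 p - xfix p.1‖ :=
  wordMean_zero _ _ _ _

variable {F D π xfix}

lemma expectedError_nonneg (hπ : ∀ a, 0 ≤ π a) (k : ℕ) (p : Fin n × Fin (L + 1)) :
    0 ≤ expectedError F D π xfix x0 k p :=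
  wordMean_nonneg _ hπ (fun _ => norm_nonneg _) _ _

lemma expectedError_succ_zero_le {A : κ → Matrix (Fin n) (Fin n) ℝ}
    (hLip : ∀ a, ∀ x y : ∀ i, X i, ∀ i, ‖F a x i - F a y i‖ ≤ ∑ j, A a i j * ‖x j - y j‖)
    (hfix : ∀ a, F a xfix = xfix) (hπ : ∀ a, 0 ≤ π a) (k : ℕ) (i : Fin n) :
    expectedError F D π xfix x0 (k + 1) (i, 0) ≤
      ∑ a, π a * ∑ j, A a i j * expectedError F D π xfix x0 k (j, D a i j) := by
  rw [expectedError, wordMean_succ]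
  refine sum_le_sum fun a _ => mul_le_mul_of_nonneg_left ?_ (hπ a)
  refine (wordMean_mono _ hπ (fun z => ?_) k x0).trans_eq (wordMean_sum_mul _ _ _ _ _ _ _)
  simpa only [delayedMap_apply_zero, hfix a] using hLip a (fun j => z (j, D a i j)) xfix i

lemma expectedError_succ_succ (k : ℕ) (i : Fin n) (ℓ : Fin L) :
    expectedError F D π xfix x0 (k + 1) (i, ℓ.succ) =
      (∑ a, π a) * expectedError F D π xfix x0 k (i, ℓ.castSucc) := by
  simp only [expectedError, wordMean_succ, delayedMap_apply_succ, sum_mul]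

lemma expectedError_succ_zero_le_mulVec {A : κ → Matrix (Fin n) (Fin n) ℝ}
    (hA : ∀ a i j, 0 ≤ A a i j)
    (hLip : ∀ a, ∀ x y : ∀ i, X i, ∀ i, ‖F a x i - F a y i‖ ≤ ∑ j, A a i j * ‖x j - y j‖)
    (hfix : ∀ a, F a xfix = xfix) (hπ : ∀ a, 0 ≤ π a) {k : ℕ} {v : Fin n → ℝ} {c : ℝ}
    (h : ∀ j d, expectedError F D π xfix x0 k (j, d) ≤ c * v j) (i : Fin n) :
    expectedError F D π xfix x0 (k + 1) (i, 0) ≤ c * ((∑ a, π a • A a) *ᵥ v) i := calc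
  _ ≤ ∑ a, π a * ∑ j, A a i j * expectedError F D π xfix x0 k (j, D a i j) :=
    expectedError_succ_zero_le x0 hLip hfix hπ k i
  _ ≤ ∑ a, π a * ∑ j, A a i j * (c * v j) :=
    sum_le_sum fun a _ => mul_le_mul_of_nonneg_left
      (sum_le_sum fun j _ => mul_le_mul_of_nonneg_left (h j _) (hA a i j)) (hπ a)
  _ = c * ((∑ a, π a • A a) *ᵥ v) i := by
    rw [Matrix.sum_mulVec, Finset.sum_apply, mul_sum]
    refine sum_congr rfl fun a _ => ?_
    simp only [Matrix.mulVec, dotProduct, Matrix.smul_apply, smul_eq_mul, mul_sum]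
    exact sum_congr rfl fun j _ => by ring

theorem pow_mul_expectedError_le {A : κ → Matrix (Fin n) (Fin n) ℝ} (hA : ∀ a i j, 0 ≤ A a i j)
    (hLip : ∀ a, ∀ x y : ∀ i, X i, ∀ i, ‖F a x i - F a y i‖ ≤ ∑ j, A a i j * ‖x j - y j‖)
    (hfix : ∀ a, F a xfix = xfix) (hπ : ∀ a, 0 ≤ π a) (hπ1 : ∑ a, π a = 1)
    {v : Fin n → ℝ} (hv : ∀ i, 1 ≤ v i) {γ : ℝ} (hγ0 : 0 < γ) (hγ1 : γ ≤ 1)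
    (hcontr : (∑ a, π a • A a) *ᵥ v ≤ γ ^ (L + 1) • v)
    (k : ℕ) (p : Fin n × Fin (L + 1)) :
    γ ^ (p.2 : ℕ) * expectedError F D π xfix x0 k p ≤
      γ ^ k * (v p.1 * ‖x0 - fun q : Fin n × Fin (L + 1) => xfix q.1‖) := by
  set M := ‖x0 - fun q : Fin n × Fin (L + 1) => xfix q.1‖
  induction k generalizing p with
  | zero =>
    have hp : ‖x0 p - xfix p.1‖ ≤ M :=
      norm_le_pi_norm (x0 - fun q : Fin n × Fin (L + 1) => xfix q.1) p
    rw [expectedError_zero, pow_zero, one_mul]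
    calc γ ^ (p.2 : ℕ) * ‖x0 p - xfix p.1‖ ≤ 1 * M :=
          mul_le_mul (pow_le_one₀ hγ0.le hγ1) hp (norm_nonneg _) zero_le_one
      _ ≤ v p.1 * M := by gcongr; exact hv p.1
  | succ k ih =>
    obtain ⟨i, ℓ⟩ := p
    cases ℓ using Fin.cases with
    | zero =>
      have hE : ∀ j d, expectedError F D π xfix x0 k (j, d) ≤ γ ^ k * M / γ ^ L * v j := by
        intro j d
        rw [div_mul_eq_mul_div, le_div_iff₀ (pow_pos hγ0 L), mul_comm, mul_assoc]
        exact (mul_le_mul_of_nonneg_right (pow_le_pow_of_le_one hγ0.le hγ1 (Fin.is_le d))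
          (expectedError_nonneg x0 hπ k _)).trans ((ih (j, d)).trans_eq (by ring))
      calc γ ^ ((0 : Fin (L + 1)) : ℕ) * expectedError F D π xfix x0 (k + 1) (i, 0)
          ≤ γ ^ k * M / γ ^ L * ((∑ a, π a • A a) *ᵥ v) i := by
            simpa using expectedError_succ_zero_le_mulVec x0 hA hLip hfix hπ hE i
        _ ≤ γ ^ k * M / γ ^ L * (γ ^ (L + 1) * v i) := by
            gcongr
            exact hcontr i
        _ = γ ^ (k + 1) * (v i * M) := by
            field_simp
            ring
    | succ ℓ =>
      have h := ih (i, ℓ.castSucc)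
      simp only [Fin.val_castSucc] at h
      rw [expectedError_succ_succ, hπ1, one_mul, Fin.val_succ, pow_succ', pow_succ', mul_assoc,
        mul_assoc]
      exact mul_le_mul_of_nonneg_left h hγ0.le

theorem wordMean_norm_sub_le {A : κ → Matrix (Fin n) (Fin n) ℝ} (hA : ∀ a i j, 0 ≤ A a i j)
    (hLip : ∀ a, ∀ x y : ∀ i, X i, ∀ i, ‖F a x i - F a y i‖ ≤ ∑ j, A a i j * ‖x j - y j‖)
    (hfix : ∀ a, F a xfix = xfix) (hπ : ∀ a, 0 ≤ π a) (hπ1 : ∑ a, π a = 1)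
    {v : Fin n → ℝ} (hv : ∀ i, 1 ≤ v i) {γ : ℝ} (hγ0 : 0 < γ) (hγ1 : γ ≤ 1)
    (hcontr : (∑ a, π a • A a) *ᵥ v ≤ γ ^ (L + 1) • v) (k : ℕ) :
    wordMean (fun a => delayedMap (F a) (D a)) π k
        (fun y => ‖y - fun q : Fin n × Fin (L + 1) => xfix q.1‖) x0 ≤
      (∑ p : Fin n × Fin (L + 1), v p.1) / γ ^ L * γ ^ k *
        ‖x0 - fun q : Fin n × Fin (L + 1) => xfix q.1‖ := by
  have hsplit : ∀ y : ∀ p : Fin n × Fin (L + 1), X p.1,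
      ‖y - fun q : Fin n × Fin (L + 1) => xfix q.1‖ ≤ ∑ p, 1 * ‖y p - xfix p.1‖ := fun y =>
    (pi_norm_le_iff_of_nonneg (sum_nonneg fun _ _ => by positivity)).2 fun p => by
      simpa using single_le_sum (fun q _ => norm_nonneg (y q - xfix q.1)) (mem_univ p)
  calc _ ≤ ∑ p, 1 * expectedError F D π xfix x0 k p :=
        (wordMean_mono _ hπ hsplit k x0).trans_eq (wordMean_sum_mul _ _ _ _ _ k x0)
    _ ≤ ∑ p : Fin n × Fin (L + 1),
          γ ^ k * (v p.1 * ‖x0 - fun q : Fin n × Fin (L + 1) => xfix q.1‖) / γ ^ L := by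
        refine sum_le_sum fun p _ => ?_
        rw [one_mul, le_div_iff₀ (pow_pos hγ0 L), mul_comm]
        exact (mul_le_mul_of_nonneg_right (pow_le_pow_of_le_one hγ0.le hγ1 (Fin.is_le p.2))
          (expectedError_nonneg x0 hπ k p)).trans
            (pow_mul_expectedError_le x0 hA hLip hfix hπ hπ1 hv hγ0 hγ1 hcontr k p)
    _ = _ := by
        rw [← sum_div, ← mul_sum, ← sum_mul]
        ring

end Delayed

theorem stmt13 {n L : ℕ} {X : Fin n → Type*}
    [∀ i, NormedAddCommGroup (X i)]
    {ι : Type*} [Fintype ι]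
    (F : ι → (∀ i, X i) → ∀ i, X i) (A : ι → Matrix (Fin n) (Fin n) ℝ)
    (hA : ∀ f i j, 0 ≤ A f i j)
    (hLip : ∀ f, ∀ x y : ∀ i, X i, ∀ i,
      ‖F f x i - F f y i‖ ≤ ∑ j, A f i j * ‖x j - y j‖)
    (xfix : ∀ i, X i) (hfix : ∀ f, F f xfix = xfix)
    (μ : ι → ℝ) (hμ0 : ∀ f, 0 ≤ μ f) (hμ1 : ∑ f, μ f = 1)
    (hρ : specRad (∑ f, μ f • A f) < 1)
    (π : ι × (Fin n → Fin n → Fin (L + 1)) → ℝ)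
    (hπ0 : ∀ fD, 0 ≤ π fD)
    (hπμ : ∀ f, ∑ D : Fin n → Fin n → Fin (L + 1), π (f, D) = μ f) :
    ∃ C > (0 : ℝ), ∃ β > (0 : ℝ), ∀ k : ℕ, 1 ≤ k →
      ∀ x0 : ∀ p : Fin n × Fin (L + 1), X p.1,
      ∑ w : Fin k → ι × (Fin n → Fin n → Fin (L + 1)),
        (∏ m, π (w m)) *
          ‖wordComp (fun fD => delayedMap (F fD.1) fD.2) w x0 -
            (fun p : Fin n × Fin (L + 1) => xfix p.1)‖ ≤
        C * Real.exp (-β * k) *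
          ‖x0 - fun p : Fin n × Fin (L + 1) => xfix p.1‖ := by
  have hmean : ∀ i j, 0 ≤ (∑ f, μ f • A f) i j := fun i j => by
    simpa [Matrix.sum_apply] using sum_nonneg fun f _ => mul_nonneg (hμ0 f) (hA f i j)
  obtain ⟨b, hb0, hb1, v, hv1, hv⟩ := exists_contraction_vector_of_specRad_lt_one hmean hρ
  set γ := b ^ ((L + 1 : ℕ)⁻¹ : ℝ)
  have hγ0 : 0 < γ := Real.rpow_pos_of_pos hb0 _
  have hγ1 : γ < 1 := Real.rpow_lt_one hb0.le hb1 (by positivity)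
  have hγb : γ ^ (L + 1) = b := Real.rpow_inv_natCast_pow hb0.le (Nat.succ_ne_zero L)
  have hπ1 : ∑ a, π a = 1 := by simp [Fintype.sum_prod_type, hπμ, hμ1]
  have hmix : ∑ a, π a • A a.1 = ∑ f, μ f • A f := by
    rw [Fintype.sum_prod_type]
    exact sum_congr rfl fun f _ => by rw [← hπμ, sum_smul]
  have hexp : ∀ k : ℕ, Real.exp (-(-Real.log γ) * k) = γ ^ k := fun k => by
    rw [neg_neg, mul_comm, Real.exp_nat_mul, Real.exp_log hγ0]
  -- the `+ 1` keeps `C` positive when `n = 0`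
  refine ⟨(∑ p : Fin n × Fin (L + 1), v p.1 + 1) / γ ^ L, ?_, -Real.log γ,
    neg_pos.2 (Real.log_neg hγ0 hγ1), fun k _ x0 => ?_⟩
  · have : 0 ≤ ∑ p : Fin n × Fin (L + 1), v p.1 :=
      sum_nonneg fun p _ => zero_le_one.trans (hv1 p.1)
    positivity
  have key := wordMean_norm_sub_le (F := fun a => F a.1) (D := Prod.snd) x0 (fun a => hA a.1)
    (fun a => hLip a.1) (fun a => hfix a.1) hπ0 hπ1 hv1 hγ0 hγ1.le
    (hmix ▸ hγb ▸ hv) k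
  refine key.trans ?_
  rw [hexp]
  gcongr
  linarith
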